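/- In a graph G of arboricity at most a, the number of triangles (cycles of length 3) is at most a·m, where m is the number of edges of G. -/

import Mathlib

/-- `ArboricityLE G a` : the edges of `G` can be partitioned into `a` forests. -/
def ArboricityLE {V : Type} (G : SimpleGraph V) (a : ℕ) : Prop :=
  ∃ F : Fin a → SimpleGraph V,
    (∀ i, (F i).IsAcyclic) ∧ (∀ i, F i ≤ G) ∧
    (∀ u v : V, G.Adj u v → ∃! i, (F i).Adj u v)

/-!
Root every component of every forest `F i` and send each vertex to its parent `p i`. Orienting
each edge of `G` towards the parent in the unique forest containing it gives an orientation in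
which the out-neighbours of `x` are among the `a` vertices `p i x`. Every triangle contains a
directed path `x → y → z`, and such a path is determined by the arc `x → y` and the out-neighbour
`z` of `y`, so there are at most `a * m` triangles.
-/

open Finset

lemma card_rel_rel_le_mul_card_rel {V : Type*} [Fintype V] [DecidableEq V] {r : V → V → Prop}
    [DecidableRel r] {a : ℕ} (hout : ∀ x, {y | r x y}.ncard ≤ a) :
    #{q : V × V × V | r q.1 q.2.1 ∧ r q.2.1 q.2.2} ≤ a * #{q : V × V | r q.1 q.2} := by
  refine card_le_mul_card_image_of_maps_to (f := fun q ↦ (q.1, q.2.1))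
    (fun q hq ↦ by simpa using (mem_filter.mp hq).2.1) a fun b _ ↦ ?_
  calc #{q ∈ {q : V × V × V | r q.1 q.2.1 ∧ r q.2.1 q.2.2} | (q.1, q.2.1) = b}
      ≤ #(({z | r b.2 z} : Finset V).image fun z ↦ (b.1, b.2, z)) := by
        refine card_le_card fun q hq ↦ ?_
        obtain ⟨hpath, rfl⟩ := mem_filter.mp hq
        exact mem_image.mpr ⟨q.2.2, by simpa using (mem_filter.mp hpath).2.2, rfl⟩
    _ ≤ #({z | r b.2 z} : Finset V) := card_image_le
    _ ≤ a := by simpa [← Set.ncard_coe_finset] using hout b.2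

namespace SimpleGraph

variable {V : Type*} {G : SimpleGraph V}

lemma IsAcyclic.eq_penultimate_of_adj_of_dist_lt (hG : G.IsAcyclic) {u v w : V}
    {p : G.Walk u v} (hp : p.IsPath) (hadj : G.Adj v w)
    (hlt : G.dist u w < G.dist u v) : w = p.penultimate := by
  classical
  obtain ⟨q, hq, hqd⟩ := (p.reachable.trans hadj.reachable).exists_path_of_dist
  have hv : v ∉ q.support := fun hv ↦ by
    have := G.dist_le (q.takeUntil v hv)
    have := q.length_takeUntil_le_length hv
    omega
  exact hG.eq_penultimate_of_adj_end hp hadj <|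
    hG.mem_support_of_ne_mem_support_of_adj_of_isPath hp hq hadj hv

lemma IsAcyclic.eq_of_adj_of_dist_lt (hG : G.IsAcyclic) {u v w₁ w₂ : V}
    (hreach : G.Reachable u v) (h₁ : G.Adj v w₁) (h₂ : G.Adj v w₂)
    (hd₁ : G.dist u w₁ < G.dist u v) (hd₂ : G.dist u w₂ < G.dist u v) : w₁ = w₂ := by
  obtain ⟨p, hp⟩ := hreach.exists_isPath
  rw [hG.eq_penultimate_of_adj_of_dist_lt hp h₁ hd₁, hG.eq_penultimate_of_adj_of_dist_lt hp h₂ hd₂]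

lemma IsAcyclic.exists_parent (hG : G.IsAcyclic) {u v : V} (hreach : G.Reachable u v) :
    ∃ x, ∀ w, G.Adj v w → (x = w ↔ G.dist u w < G.dist u v) := by
  by_cases h : ∃ w, G.Adj v w ∧ G.dist u w < G.dist u v
  · obtain ⟨x, hx, hxd⟩ := h
    exact ⟨x, fun w hw ↦ ⟨(· ▸ hxd), hG.eq_of_adj_of_dist_lt hreach hx hw hxd⟩⟩
  · push Not at h
    exact ⟨v, fun w hw ↦ iff_of_false hw.ne (h w hw).not_gt⟩

lemma IsAcyclic.exists_parent_map (hG : G.IsAcyclic) :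
    ∃ p : V → V, ∀ v w, G.Adj v w → (p v = w ↔ p w ≠ v) := by
  set root : V → V := fun v ↦ (G.connectedComponentMk v).out
  have hroot : ∀ v, G.Reachable (root v) v := fun v ↦ ConnectedComponent.exact (Quot.out_eq _)
  choose p hp using fun v ↦ hG.exists_parent (hroot v)
  refine ⟨p, fun v w hadj ↦ ?_⟩
  have hrw : root w = root v := by
    simp only [root, ConnectedComponent.sound hadj.symm.reachable]
  rw [Ne, hp v w hadj, hp w v hadj.symm, hrw]
  have := hG.dist_ne_of_adj hadj (hroot v)
  omega

structure IsOrientation (G : SimpleGraph V) (r : V → V → Prop) : Prop where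
  adj_of_rel : ∀ {x y}, r x y → G.Adj x y
  rel_or_rel : ∀ {x y}, G.Adj x y → r x y ∨ r y x
  asymm : ∀ {x y}, r x y → ¬ r y x

namespace IsOrientation

variable {r : V → V → Prop}

lemma exists_rel_rel_of_isNClique_three (hr : G.IsOrientation r) [DecidableEq V] {s : Finset V}
    (hs : G.IsNClique 3 s) :
    ∃ x y z, r x y ∧ r y z ∧ {x, y, z} = s := by
  obtain ⟨a, b, c, hab, hac, hbc, rfl⟩ := is3Clique_iff.mp hs
  rcases hr.rel_or_rel hab with h₁ | h₁ <;> rcases hr.rel_or_rel hbc with h₂ | h₂ <;>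
    rcases hr.rel_or_rel hac with h₃ | h₃
  all_goals first
    | exact ⟨_, _, _, h₁, h₂, by grind⟩
    | exact ⟨_, _, _, h₂, h₁, by grind⟩
    | exact ⟨_, _, _, h₁, h₃, by grind⟩
    | exact ⟨_, _, _, h₃, h₁, by grind⟩
    | exact ⟨_, _, _, h₂, h₃, by grind⟩
    | exact ⟨_, _, _, h₃, h₂, by grind⟩

lemma card_rel_eq_card_edgeFinset (hr : G.IsOrientation r) [Fintype V] [DecidableRel G.Adj]
    [DecidableRel r] : #{q : V × V | r q.1 q.2} = #G.edgeFinset := by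
  refine card_nbij (fun q ↦ s(q.1, q.2)) (fun q hq ↦ ?_) (fun q₁ hq₁ q₂ hq₂ heq ↦ ?_) ?_
  · simpa using hr.adj_of_rel (mem_filter.mp hq).2
  · rcases Sym2.eq_iff.mp heq with ⟨h₁, h₂⟩ | ⟨h₁, h₂⟩
    · exact Prod.ext h₁ h₂
    · exact absurd (h₁ ▸ h₂ ▸ (mem_filter.mp hq₁).2) (hr.asymm (mem_filter.mp hq₂).2)
  · intro e he
    induction e with
    | _ x y =>
      rcases hr.rel_or_rel (mem_edgeFinset.mp he) with h | h
      · exact ⟨(x, y), by simpa using h, rfl⟩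
      · exact ⟨(y, x), by simpa using h, Sym2.eq_swap⟩

lemma card_cliqueFinset_three_le (hr : G.IsOrientation r) [Fintype V] [DecidableEq V]
    [DecidableRel G.Adj] {a : ℕ} (hout : ∀ x, {y | r x y}.ncard ≤ a) :
    #(G.cliqueFinset 3) ≤ a * #G.edgeFinset := by
  classical
  have hcover : G.cliqueFinset 3 ⊆
      ({q : V × V × V | r q.1 q.2.1 ∧ r q.2.1 q.2.2} : Finset _).image
        fun q ↦ {q.1, q.2.1, q.2.2} := fun s hs ↦ by
    obtain ⟨x, y, z, hxy, hyz, rfl⟩ :=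
      hr.exists_rel_rel_of_isNClique_three (mem_cliqueFinset_iff.mp hs)
    exact mem_image.mpr ⟨(x, y, z), by simpa using ⟨hxy, hyz⟩, rfl⟩
  calc #(G.cliqueFinset 3) ≤ #{q : V × V × V | r q.1 q.2.1 ∧ r q.2.1 q.2.2} :=
        (card_le_card hcover).trans card_image_le
    _ ≤ a * #{q : V × V | r q.1 q.2} := card_rel_rel_le_mul_card_rel hout
    _ = a * #G.edgeFinset := by rw [hr.card_rel_eq_card_edgeFinset]

end IsOrientation

end SimpleGraph

theorem ArboricityLE.exists_isOrientation {V : Type} {G : SimpleGraph V} {a : ℕ}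
    (h : ArboricityLE G a) : ∃ r, G.IsOrientation r ∧ ∀ x, {y | r x y}.ncard ≤ a := by
  obtain ⟨F, hF, hFG, hunique⟩ := h
  choose p hp using fun i ↦ (hF i).exists_parent_map
  refine ⟨fun x y ↦ ∃ i, (F i).Adj x y ∧ p i x = y, ⟨?_, ?_, ?_⟩, fun x ↦ ?_⟩
  · rintro x y ⟨i, hi, -⟩
    exact hFG i hi
  · intro x y hxy
    obtain ⟨i, hi, -⟩ := hunique x y hxy
    by_cases hpi : p i x = y
    · exact .inl ⟨i, hi, hpi⟩
    · exact .inr ⟨i, hi.symm, by simpa [hpi] using hp i x y hi⟩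
  · rintro x y ⟨i, hi, hpi⟩ ⟨j, hj, hpj⟩
    obtain ⟨k, -, hk⟩ := hunique x y (hFG i hi)
    obtain rfl : j = i := (hk j hj.symm).trans (hk i hi).symm
    exact (hp j x y hi).mp hpi hpj
  · calc {y | ∃ i, (F i).Adj x y ∧ p i x = y}.ncard
        ≤ ((fun i ↦ p i x) '' Set.univ).ncard :=
          Set.ncard_le_ncard (by rintro y ⟨i, -, rfl⟩; exact ⟨i, trivial, rfl⟩) (Set.toFinite _)
      _ ≤ (Set.univ : Set (Fin a)).ncard := Set.ncard_image_le (Set.toFinite _)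
      _ = a := by simp

/-- In a graph of arboricity at most `a`, the number of triangles is at most
`a * m`, where `m` is the number of edges. -/
theorem arboricity_triangle_bound {V : Type} [Fintype V] [DecidableEq V]
    (G : SimpleGraph V) [DecidableRel G.Adj] (a : ℕ) (h : ArboricityLE G a) :
    (G.cliqueFinset 3).card ≤ a * G.edgeFinset.card := by
  obtain ⟨r, hr, hout⟩ := h.exists_isOrientation
  exact hr.card_cliqueFinset_three_le hout
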